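/- Let p > 1. There exists a constant C > 0, depending only on p, such that C_p^{(n)} ≤ C·(8·3^{-p})^n for every n ≥ 1. In particular, ρ_p ≥ 3^p/8. -/

import Mathlib

open MeasureTheory Filter Set Topology

noncomputable section

/-- The plane with the Euclidean metric. -/
abbrev Plane : Type := EuclideanSpace ℝ (Fin 2)

/-- Build a point of the plane from its two coordinates. -/
def mkPt (a b : ℝ) : Plane := (WithLp.equiv 2 (Fin 2 → ℝ)).symm ![a, b]

/-- The eight fixed points `p_1, …, p_8` (indexed by `0, …, 7`). -/
def fixedPt : Fin 8 → Plane
  | 0 => mkPt (-(1/2)) (-(1/2))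
  | 1 => mkPt 0 (-(1/2))
  | 2 => mkPt (1/2) (-(1/2))
  | 3 => mkPt (1/2) 0
  | 4 => mkPt (1/2) (1/2)
  | 5 => mkPt 0 (1/2)
  | 6 => mkPt (-(1/2)) (1/2)
  | 7 => mkPt (-(1/2)) 0

/-- The contraction `f_i(x) = (x - p_i)/3 + p_i`. -/
def cmap (i : Fin 8) (x : Plane) : Plane := (3 : ℝ)⁻¹ • (x - fixedPt i) + fixedPt i

/-- The coding (address) map of the iterated function system `{f_i}`. -/
def code (ω : ℕ → Fin 8) : Plane :=
  ∑' k : ℕ, (((3 : ℝ)⁻¹) ^ k * (2 / 3)) • fixedPt (ω k)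

/-- The planar Sierpiński carpet `K`, i.e. the attractor of `{f_i}_{i ∈ S}`. -/
def carpet : Set Plane := Set.range code

/-- Words of length `n` over the alphabet `S = {1, …, 8}`. -/
abbrev Word (n : ℕ) := Fin n → Fin 8

/-- `F_w = F_{w_1} ∘ ⋯ ∘ F_{w_n}`. -/
def wordMap : {n : ℕ} → Word n → Plane → Plane
  | 0, _ => id
  | _ + 1, w => cmap (w 0) ∘ wordMap (fun i => w i.succ)

/-- The cell `K_w = F_w(K)`. -/
def cell {n : ℕ} (w : Word n) : Set Plane := wordMap w '' carpet

/-- The approximating graph `G_n = (W_n, E_n)`: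
`(v,w) ∈ E_n` iff `v ≠ w` and `K_v ∩ K_w ≠ ∅`. -/
def carpetGraph (n : ℕ) : SimpleGraph (Word n) where
  Adj v w := v ≠ w ∧ (cell v ∩ cell w).Nonempty
  symm := by
    constructor
    intro v w h
    exact ⟨h.1.symm, by rw [Set.inter_comm]; exact h.2⟩
  loopless := ⟨fun v h => h.1 rfl⟩

open Classical in
/-- Discrete `p`-energy `E_p^G(f) = (1/2) ∑_{(x,y) ∈ E} |f x - f y|^p`. -/
def gEnergy (p : ℝ) {V : Type} [Fintype V] (G : SimpleGraph V) (f : V → ℝ) : ℝ :=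
  (1 / 2) * ∑ x : V, ∑ y : V, if G.Adj x y then |f x - f y| ^ p else 0

open Classical in
/-- Discrete `p`-energy restricted to the edges with both endpoints in `A`. -/
def gEnergyOn (p : ℝ) {V : Type} [Fintype V] (G : SimpleGraph V) (A : Set V) (f : V → ℝ) : ℝ :=
  (1 / 2) * ∑ x : V, ∑ y : V, if G.Adj x y ∧ x ∈ A ∧ y ∈ A then |f x - f y| ^ p else 0

/-- `p`-conductance `C_p^G(A,B)` between `A` and `B`. -/
def gCond (p : ℝ) {V : Type} [Fintype V] (G : SimpleGraph V) (A B : Set V) : ℝ :=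
  sInf { e | ∃ f : V → ℝ, (∀ x ∈ A, f x = 1) ∧ (∀ x ∈ B, f x = 0) ∧ e = gEnergy p G f }

/-- `p`-conductance computed with the energy restricted to `U`. -/
def gCondOn (p : ℝ) {V : Type} [Fintype V] (G : SimpleGraph V) (U A B : Set V) : ℝ :=
  sInf { e | ∃ f : V → ℝ, (∀ x ∈ A, f x = 1) ∧ (∀ x ∈ B, f x = 0) ∧ e = gEnergyOn p G U f }

/-- The set `w·W_n ⊆ W_{m+n}` of refinements of the word `w`. -/
def subWords {m : ℕ} (n : ℕ) (w : Word m) : Set (Word (m + n)) :=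
  { u | ∃ v : Word n, u = Fin.append w v }

/-- The set `B_n(w,1) ⊆ W_{m+n}`: refinements of words at graph distance `≤ 1` from `w`. -/
def nbhdWords {m : ℕ} (n : ℕ) (w : Word m) : Set (Word (m + n)) :=
  { u | ∃ v : Word m, (v = w ∨ (carpetGraph m).Adj v w) ∧ u ∈ subWords n v }

/-- `C_p^{(n)} = sup_{w ∈ W_#} C_p^{G_{|w|+n}}(w·W_n, W_{|w|+n} ∖ B_n(w,1))`. -/
def Cpn (p : ℝ) (n : ℕ) : ℝ :=
  ⨆ m : ℕ, ⨆ w : Word (m + 1),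
    gCond p (carpetGraph (m + 1 + n)) (subWords n w) (nbhdWords n w)ᶜ

/-- `R_p^{(n)} = (C_p^{(n)})⁻¹`. -/
def Rpn (p : ℝ) (n : ℕ) : ℝ := (Cpn p n)⁻¹

/-- `ρ` is the limit (due to Bourdon–Kleiner) of `(C_p^{(n)})^{-1/n}` as `n → ∞`. -/
def IsCondLimit (p ρ : ℝ) : Prop :=
  Tendsto (fun n : ℕ => ((Cpn p n)⁻¹) ^ ((n : ℝ)⁻¹)) atTop (nhds ρ)

/-- `α = log 8 / log 3`, the Hausdorff dimension of the carpet. -/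
def alphaDim : ℝ := Real.log 8 / Real.log 3

/-- `β_p = log (8 ρ_p) / log 3`. -/
def betaP (ρ : ℝ) : ℝ := Real.log (8 * ρ) / Real.log 3

open Classical in
/-- Mean `⟨f⟩_A = (1/#A) ∑_{w ∈ A} f(w)` of `f` over a set of words. -/
def wordMean {n : ℕ} (A : Set (Word n)) (f : Word n → ℝ) : ℝ :=
  (∑ w : Word n, if w ∈ A then f w else 0) / (Nat.card ↥A)

/-- The closed square `[-1/2, 1/2]²`. -/
def unitSq : Set Plane := { x | ∀ i, x i ∈ Set.Icc (-(1/2) : ℝ) (1/2) }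

/-- The boundary words `∂_*G_n = {w ∈ W_n : K_w ∩ ∂[-1/2,1/2]² ≠ ∅}`. -/
def bdryWords (n : ℕ) : Set (Word n) := { w | (cell w ∩ frontier unitSq).Nonempty }

/-- The `(p,p)`-Poincaré constant `λ_p^{(n)}`. -/
def lamP (p : ℝ) (n : ℕ) : ℝ :=
  sSup { r | ∃ f : Word n → ℝ, gEnergy p (carpetGraph n) f ≠ 0 ∧
    r = ((8 : ℝ) ^ n)⁻¹ * (∑ w : Word n, |f w - wordMean Set.univ f| ^ p) /
      gEnergy p (carpetGraph n) f }

/-- The Dirichlet-boundary Poincaré constant `λ_{*,p}^{(n)}`. -/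
def lamStarP (p : ℝ) (n : ℕ) : ℝ :=
  sSup { r | ∃ f : Word n → ℝ, (∀ w ∈ bdryWords n, f w = 0) ∧
    gEnergy p (carpetGraph n) f ≠ 0 ∧
    r = |wordMean Set.univ f| ^ p / gEnergy p (carpetGraph n) f }

/-- `σ_p^{(n)}(v,w)` for words `v, w ∈ W_m`. -/
def sigmaPvw (p : ℝ) {m : ℕ} (n : ℕ) (v w : Word m) : ℝ :=
  sSup { r | ∃ f : Word (m + n) → ℝ,
    gEnergyOn p (carpetGraph (m + n)) (subWords n v ∪ subWords n w) f ≠ 0 ∧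
    r = |wordMean (subWords n v) f - wordMean (subWords n w) f| ^ p /
      gEnergyOn p (carpetGraph (m + n)) (subWords n v ∪ subWords n w) f }

/-- `(v,w) ∈ Ẽ_n`: adjacent words whose cells intersect in a line segment. -/
def goodEdge {n : ℕ} (v w : Word n) : Prop :=
  (carpetGraph n).Adj v w ∧ ∃ a b : Plane, a ≠ b ∧ cell v ∩ cell w = segment ℝ a b

/-- `σ_p^{(n)} = sup_{m ≥ 1} max_{(v,w) ∈ Ẽ_m} σ_p^{(n)}(v,w)`. -/
def sigmaP (p : ℝ) (n : ℕ) : ℝ :=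
  sSup { r | ∃ (m : ℕ) (v w : Word (m + 1)), goodEdge v w ∧ r = sigmaPvw p n v w }

/-- The uniform degree bound `D_* = sup_{w ∈ W_#} #{v : (v,w) ∈ E_{|w|}}` (equal to `7`). -/
def Dstar : ℕ :=
  ⨆ m : ℕ, ⨆ w : Word (m + 1),
    Nat.card { v : Word (m + 1) // (carpetGraph (m + 1)).Adj v w }

/-- `M_n f(w) = ⨍_{K_w} f dμ`, the average of `f` over the cell `K_w`. -/
def cellAvg {n : ℕ} (μ : Measure Plane) (f : Plane → ℝ) (w : Word n) : ℝ :=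
  ⨍ x in cell w, f x ∂μ

/-- The discrete `p`-energy of `M_n f` on the graph `G_n`. -/
def fEnergy (p : ℝ) (μ : Measure Plane) (n : ℕ) (f : Plane → ℝ) : ℝ :=
  gEnergy p (carpetGraph n) (cellAvg μ f)

/-- Membership in the `(1,p)`-Sobolev space
`F_p = {f ∈ L^p(K,μ) : sup_{n ≥ 1} ρ^n E_p^{G_n}(M_n f) < ∞}`. -/
def MemFp (p ρ : ℝ) (μ : Measure Plane) (f : Plane → ℝ) : Prop :=
  MemLp f (ENNReal.ofReal p) μ ∧
    ∃ C : ℝ, ∀ n : ℕ, 1 ≤ n → ρ ^ n * fEnergy p μ n f ≤ C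

/-- The seminorm `|f|_{F_p} = (sup_{n ≥ 1} ρ^n E_p^{G_n}(M_n f))^{1/p}`. -/
def fpSemi (p ρ : ℝ) (μ : Measure Plane) (f : Plane → ℝ) : ℝ :=
  (⨆ n : ℕ, ρ ^ (n + 1) * fEnergy p μ (n + 1) f) ^ p⁻¹

/-- The norm `‖f‖_{F_p} = ‖f‖_{L^p(K,μ)} + |f|_{F_p}`. -/
def fpNorm (p ρ : ℝ) (μ : Measure Plane) (f : Plane → ℝ) : ℝ :=
  (eLpNorm f (ENNReal.ofReal p) μ).toReal + fpSemi p ρ μ f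

end


section AuxCarpet

lemma carpetGraph_adj {n : ℕ} {v w : Word n} :
    (carpetGraph n).Adj v w ↔ v ≠ w ∧ (cell v ∩ cell w).Nonempty := Iff.rfl

/-- Integer doubled coordinates of the eight fixed points. -/
def dig : Fin 8 → Fin 2 → ℤ
  | 0 => ![-1,-1]
  | 1 => ![0,-1]
  | 2 => ![1,-1]
  | 3 => ![1,0]
  | 4 => ![1,1]
  | 5 => ![0,1]
  | 6 => ![-1,1]
  | 7 => ![-1,0]

lemma fixedPt_apply (i : Fin 8) (j : Fin 2) : fixedPt i j = (dig i j : ℝ) / 2 := by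
  fin_cases i <;> fin_cases j <;>
    norm_num [fixedPt, dig, mkPt, WithLp.equiv_symm_apply, PiLp.toLp_apply]

lemma abs_dig_le (i : Fin 8) (j : Fin 2) : |dig i j| ≤ 1 := by
  fin_cases i <;> fin_cases j <;> decide

lemma dig_inj {i i' : Fin 8} (h : ∀ j, dig i j = dig i' j) : i = i' := by
  have h0 := h 0; have h1 := h 1
  revert h0 h1
  fin_cases i <;> fin_cases i' <;> decide

/-- Scaled integer center of the cell of a word. -/
def ic {N : ℕ} (w : Word N) (j : Fin 2) : ℤ :=
  ∑ k : Fin N, dig (w k) j * 3 ^ (N - 1 - (k : ℕ))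

lemma ic_zero (w : Word 0) (j : Fin 2) : ic w j = 0 := by simp [ic]

lemma ic_succ {N : ℕ} (w : Word (N + 1)) (j : Fin 2) :
    ic w j = dig (w 0) j * 3 ^ N + ic (fun i => w i.succ) j := by
  have htail : ic (fun i => w i.succ) j
      = ∑ k : Fin N, dig (w k.succ) j * 3 ^ (N + 1 - 1 - ((k.succ : Fin (N+1)) : ℕ)) := by
    rw [ic]
    apply Finset.sum_congr rfl
    intro k _
    congr 2
    simp only [Fin.val_succ]
    omega
  rw [ic, Fin.sum_univ_succ, htail]
  norm_num

lemma ic_abs_le : ∀ {N : ℕ} (w : Word N) (j : Fin 2), 2 * |ic w j| ≤ 3 ^ N - 1 := by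
  intro N
  induction N with
  | zero => intro w j; simp [ic_zero]
  | succ N ih =>
    intro w j
    rw [ic_succ]
    have h1 := ih (fun i => w i.succ) j
    have h2 := abs_dig_le (w 0) j
    have h3 : (0:ℤ) < 3 ^ N := by positivity
    have h4 : |dig (w 0) j * 3 ^ N + ic (fun i => w i.succ) j| ≤
        |dig (w 0) j| * 3 ^ N + |ic (fun i => w i.succ) j| := by
      calc |dig (w 0) j * 3 ^ N + ic (fun i => w i.succ) j|
          ≤ |dig (w 0) j * 3 ^ N| + |ic (fun i => w i.succ) j| := abs_add_le _ _
        _ = _ := by rw [abs_mul, abs_pow, show |(3:ℤ)| = 3 from rfl]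
    have h5 : (0:ℤ) ≤ |ic (fun i => w i.succ) j| := abs_nonneg _
    have h6 : (3:ℤ) ^ (N + 1) = 3 * 3 ^ N := by ring
    nlinarith [mul_le_mul_of_nonneg_right h2 (le_of_lt h3)]

lemma ic_inj : ∀ {N : ℕ} {v w : Word N}, (∀ j, ic v j = ic w j) → v = w := by
  intro N
  induction N with
  | zero => intro v w _; funext i; exact absurd i.2 (by omega)
  | succ N ih =>
    intro v w h
    have key : ∀ j, dig (v 0) j = dig (w 0) j ∧
        ic (fun i => v i.succ) j = ic (fun i => w i.succ) j := by
      intro j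
      have hj := h j
      rw [ic_succ, ic_succ] at hj
      have h1 := ic_abs_le (fun i => v i.succ) j
      have h2 := ic_abs_le (fun i => w i.succ) j
      have h3 : (0:ℤ) < 3 ^ N := by positivity
      have hd : dig (v 0) j = dig (w 0) j := by
        by_contra hne
        have hone : 1 ≤ |dig (v 0) j - dig (w 0) j| :=
          Int.one_le_abs (sub_ne_zero.mpr hne)
        have heq : (dig (v 0) j - dig (w 0) j) * 3 ^ N =
            ic (fun i => w i.succ) j - ic (fun i => v i.succ) j := by linarith
        have habs : |dig (v 0) j - dig (w 0) j| * 3 ^ N ≤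
            |ic (fun i => w i.succ) j| + |ic (fun i => v i.succ) j| := by
          calc |dig (v 0) j - dig (w 0) j| * 3 ^ N
              = |(dig (v 0) j - dig (w 0) j) * 3 ^ N| := by
                rw [abs_mul, abs_pow, show |(3:ℤ)| = 3 from rfl]
            _ = |ic (fun i => w i.succ) j - ic (fun i => v i.succ) j| := by rw [heq]
            _ ≤ _ := abs_sub _ _
        nlinarith [mul_le_mul_of_nonneg_right hone (le_of_lt h3)]
      refine ⟨hd, by rw [hd] at hj; linarith⟩
    have h0 : v 0 = w 0 := dig_inj fun j => (key j).1
    have ht : (fun i : Fin N => v i.succ) = (fun i => w i.succ) := ih fun j => (key j).2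
    funext i
    rcases Fin.eq_zero_or_eq_succ i with rfl | ⟨i', rfl⟩
    · exact h0
    · exact congrFun ht i'

end AuxCarpet
section AuxGeom

lemma abs_fixedPt_le (i : Fin 8) (j : Fin 2) : |fixedPt i j| ≤ 1 / 2 := by
  rw [fixedPt_apply]
  have := abs_dig_le i j
  rw [abs_div]
  have : |(dig i j : ℝ)| ≤ 1 := by exact_mod_cast this
  rw [show |(2:ℝ)| = 2 by norm_num]
  linarith

lemma norm_fixedPt_le (i : Fin 8) : ‖fixedPt i‖ ≤ 1 := by
  rw [EuclideanSpace.norm_eq]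
  have : ∑ j : Fin 2, ‖fixedPt i j‖ ^ 2 ≤ 1 := by
    rw [Fin.sum_univ_two]
    have h0 := abs_fixedPt_le i 0
    have h1 := abs_fixedPt_le i 1
    rw [Real.norm_eq_abs, Real.norm_eq_abs]
    nlinarith [abs_nonneg (fixedPt i 0), abs_nonneg (fixedPt i 1)]
  calc √(∑ j : Fin 2, ‖fixedPt i j‖ ^ 2) ≤ √1 := Real.sqrt_le_sqrt this
    _ = 1 := Real.sqrt_one

lemma summable_geom_aux : Summable fun k : ℕ => ((3 : ℝ)⁻¹) ^ k * (2 / 3) :=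
  (summable_geometric_of_lt_one (by norm_num) (by norm_num)).mul_right _

lemma summable_code_aux (ω : ℕ → Fin 8) :
    Summable fun k : ℕ => (((3 : ℝ)⁻¹) ^ k * (2 / 3)) • fixedPt (ω k) := by
  apply Summable.of_norm
  apply Summable.of_nonneg_of_le (fun k => norm_nonneg _) _ summable_geom_aux
  intro k
  rw [norm_smul]
  have h1 : ‖((3 : ℝ)⁻¹) ^ k * (2 / 3)‖ = ((3 : ℝ)⁻¹) ^ k * (2 / 3) := by
    rw [Real.norm_eq_abs, abs_of_nonneg]; positivity
  rw [h1]
  have h3 : (0:ℝ) ≤ ((3 : ℝ)⁻¹) ^ k * (2 / 3) := by positivity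
  nlinarith [norm_fixedPt_le (ω k), norm_nonneg (fixedPt (ω k))]

lemma code_apply (ω : ℕ → Fin 8) (j : Fin 2) :
    code ω j = ∑' k : ℕ, (((3 : ℝ)⁻¹) ^ k * (2 / 3)) * fixedPt (ω k) j := by
  have := (EuclideanSpace.proj (𝕜 := ℝ) j).map_tsum (summable_code_aux ω)
  have h2 : ∀ k : ℕ, (EuclideanSpace.proj (𝕜 := ℝ) j) ((((3 : ℝ)⁻¹) ^ k * (2 / 3)) • fixedPt (ω k))
      = (((3 : ℝ)⁻¹) ^ k * (2 / 3)) * fixedPt (ω k) j := by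
    intro k
    rw [_root_.map_smul]
    rfl
  rw [code]
  calc (∑' k : ℕ, (((3 : ℝ)⁻¹) ^ k * (2 / 3)) • fixedPt (ω k)) j
      = (EuclideanSpace.proj (𝕜 := ℝ) j) (∑' k : ℕ, (((3 : ℝ)⁻¹) ^ k * (2 / 3)) • fixedPt (ω k)) := rfl
    _ = _ := by rw [this]; exact tsum_congr h2

lemma carpet_coord_le {x : Plane} (hx : x ∈ carpet) (j : Fin 2) : |x j| ≤ 1 / 2 := by
  obtain ⟨ω, rfl⟩ := hx
  rw [code_apply]
  set f : ℕ → ℝ := fun k => (((3 : ℝ)⁻¹) ^ k * (2 / 3)) * fixedPt (ω k) j with hf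
  have habs : ∀ k, |f k| ≤ ((3 : ℝ)⁻¹) ^ k * (1 / 3) := by
    intro k
    rw [hf]
    simp only
    rw [abs_mul, abs_of_nonneg (by positivity : (0:ℝ) ≤ ((3 : ℝ)⁻¹) ^ k * (2 / 3))]
    have := abs_fixedPt_le (ω k) j
    nlinarith [pow_nonneg (by norm_num : (0:ℝ) ≤ (3:ℝ)⁻¹) k]
  have hg : Summable fun k : ℕ => ((3 : ℝ)⁻¹) ^ k * (1 / 3) :=
    (summable_geometric_of_lt_one (by norm_num) (by norm_num)).mul_right _
  have habsSum : Summable fun k => |f k| :=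
    Summable.of_nonneg_of_le (fun k => abs_nonneg _) habs hg
  have hsum : Summable f := habsSum.of_abs
  have h1 : |∑' k, f k| ≤ ∑' k, |f k| := by
    simpa [Real.norm_eq_abs] using norm_tsum_le_tsum_norm (f := f) (by simpa [Real.norm_eq_abs] using habsSum)
  have h2 : ∑' k, |f k| ≤ ∑' k : ℕ, ((3 : ℝ)⁻¹) ^ k * (1 / 3) := Summable.tsum_le_tsum habs habsSum hg
  have h3 : ∑' k : ℕ, ((3 : ℝ)⁻¹) ^ k * (1 / 3) = 1 / 2 := by
    rw [tsum_mul_right, tsum_geometric_of_lt_one (by norm_num) (by norm_num)]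
    norm_num
  linarith

lemma fixedPt_mem_carpet (i : Fin 8) : fixedPt i ∈ carpet := by
  refine ⟨fun _ => i, ?_⟩
  rw [code, summable_geom_aux.tsum_smul_const]
  have : (∑' k : ℕ, ((3 : ℝ)⁻¹) ^ k * (2 / 3)) = 1 := by
    rw [tsum_mul_right, tsum_geometric_of_lt_one (by norm_num) (by norm_num)]
    norm_num
  rw [this, one_smul]

lemma cmap_apply (i : Fin 8) (y : Plane) (j : Fin 2) :
    cmap i y j = (3 : ℝ)⁻¹ * (y j - fixedPt i j) + fixedPt i j := by
  rw [cmap]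
  rw [PiLp.add_apply, PiLp.smul_apply, PiLp.sub_apply, smul_eq_mul]

lemma wordMap_apply : ∀ {N : ℕ} (w : Word N) (x : Plane) (j : Fin 2),
    wordMap w x j = (x j + ic w j) / 3 ^ N := by
  intro N
  induction N with
  | zero => intro w x j; simp [wordMap, ic_zero]
  | succ N ih =>
    intro w x j
    show cmap (w 0) (wordMap (fun i => w i.succ) x) j = _
    rw [cmap_apply, ih, fixedPt_apply, ic_succ]
    have h3 : (3:ℝ) ^ N ≠ 0 := by positivity
    push_cast
    field_simp
    ring

lemma corner_mem_cell {N : ℕ} (w : Word N) (i : Fin 8) : wordMap w (fixedPt i) ∈ cell w :=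
  ⟨fixedPt i, fixedPt_mem_carpet i, rfl⟩

lemma mem_cell_bound {N : ℕ} {w : Word N} {x : Plane} (hx : x ∈ cell w) (j : Fin 2) :
    |3 ^ N * x j - ic w j| ≤ 1 / 2 := by
  obtain ⟨y, hy, rfl⟩ := hx
  rw [wordMap_apply]
  have h3 : (3:ℝ) ^ N ≠ 0 := by positivity
  have : (3:ℝ) ^ N * ((y j + ic w j) / 3 ^ N) - ic w j = y j := by field_simp; ring
  rw [this]
  exact carpet_coord_le hy j

lemma cells_intersect_ic_close {N : ℕ} {v w : Word N}
    (h : (cell v ∩ cell w).Nonempty) (j : Fin 2) : |ic v j - ic w j| ≤ 1 := by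
  obtain ⟨x, hv, hw⟩ := h
  have h1 := mem_cell_bound hv j
  have h2 := mem_cell_bound hw j
  have : |(ic v j : ℝ) - ic w j| ≤ 1 := by
    have h3 := abs_sub_le ((ic v j : ℝ)) (3 ^ N * x j) ((ic w j : ℝ))
    have h4 : |(ic v j : ℝ) - 3 ^ N * x j| = |3 ^ N * x j - (ic v j : ℝ)| := abs_sub_comm _ _
    have h5 : |(3:ℝ) ^ N * x j - (ic w j : ℝ)| = |(ic w j : ℝ) - 3 ^ N * x j| := abs_sub_comm _ _
    linarith
  exact_mod_cast this

lemma exists_corner (a b : ℤ) (ha : |a| = 1) (hb : |b| = 1) :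
    ∃ c : Fin 8, dig c 0 = a ∧ dig c 1 = b := by
  rcases abs_eq (by norm_num : (0:ℤ) ≤ 1) |>.mp ha with rfl | rfl <;>
    rcases abs_eq (by norm_num : (0:ℤ) ≤ 1) |>.mp hb with rfl | rfl
  · exact ⟨4, by decide⟩
  · exact ⟨2, by decide⟩
  · exact ⟨6, by decide⟩
  · exact ⟨0, by decide⟩

lemma close_cells_intersect {N : ℕ} {v w : Word N}
    (h : ∀ j, |ic v j - ic w j| ≤ 1) : (cell v ∩ cell w).Nonempty := by
  have hex : ∀ j : Fin 2, ∃ av aw : ℤ, |av| = 1 ∧ |aw| = 1 ∧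
      av - aw = 2 * (ic w j - ic v j) := by
    intro j
    have := h j
    rw [abs_le] at this
    rcases (by omega : ic w j - ic v j = -1 ∨ ic w j - ic v j = 0 ∨ ic w j - ic v j = 1) with h' | h' | h'
    · exact ⟨-1, 1, by decide, by decide, by omega⟩
    · exact ⟨1, 1, by decide, by decide, by omega⟩
    · exact ⟨1, -1, by decide, by decide, by omega⟩
  obtain ⟨av0, aw0, hv0, hw0, he0⟩ := hex 0
  obtain ⟨av1, aw1, hv1, hw1, he1⟩ := hex 1
  obtain ⟨cv, hcv0, hcv1⟩ := exists_corner av0 av1 hv0 hv1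
  obtain ⟨cw, hcw0, hcw1⟩ := exists_corner aw0 aw1 hw0 hw1
  refine ⟨wordMap v (fixedPt cv), corner_mem_cell v cv, ?_⟩
  have hkey : wordMap v (fixedPt cv) = wordMap w (fixedPt cw) := by
    ext j
    rw [wordMap_apply, wordMap_apply, fixedPt_apply, fixedPt_apply]
    have : (dig cv j : ℝ) - dig cw j = 2 * ((ic w j : ℝ) - ic v j) := by
      have : dig cv j - dig cw j = 2 * (ic w j - ic v j) := by
        rcases (by omega : (j : ℕ) = 0 ∨ (j : ℕ) = 1) with hj | hj
        · have : j = 0 := by exact Fin.ext hj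
          subst this; rw [hcv0, hcw0]; exact he0
        · have : j = 1 := by exact Fin.ext hj
          subst this; rw [hcv1, hcw1]; exact he1
      exact_mod_cast this
    have h3 : (3:ℝ) ^ N ≠ 0 := by positivity
    field_simp
    linarith
  rw [hkey]
  exact corner_mem_cell w cw

end AuxGeom
section AuxAppend

/-- Prefix of a word. -/
def preW {m n : ℕ} (u : Word (m + n)) : Word m := fun i => u (Fin.castAdd n i)

/-- Suffix of a word. -/
def sufW {m n : ℕ} (u : Word (m + n)) : Word n := fun i => u (Fin.natAdd m i)

lemma append_pre_suf {m n : ℕ} (u : Word (m + n)) : Fin.append (preW u) (sufW u) = u := by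
  funext i
  refine Fin.addCases (fun i' => ?_) (fun i' => ?_) i
  · rw [Fin.append_left]; rfl
  · rw [Fin.append_right]; rfl

lemma append_eq_iff {m n : ℕ} {v v' : Word m} {x x' : Word n}
    (h : Fin.append v x = Fin.append v' x') : v = v' ∧ x = x' := by
  constructor
  · funext i
    have := congrFun h (Fin.castAdd n i)
    rwa [Fin.append_left, Fin.append_left] at this
  · funext i
    have := congrFun h (Fin.natAdd m i)
    rwa [Fin.append_right, Fin.append_right] at this

lemma ic_append {m n : ℕ} (v : Word m) (x : Word n) (j : Fin 2) :
    ic (Fin.append v x) j = 3 ^ n * ic v j + ic x j := by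
  rw [ic, Fin.sum_univ_add]
  congr 1
  · rw [ic, Finset.mul_sum]
    apply Finset.sum_congr rfl
    intro k _
    rw [Fin.append_left]
    have hk : (k : ℕ) < m := k.2
    have : (3:ℤ) ^ (m + n - 1 - ((Fin.castAdd n k : Fin (m + n)) : ℕ))
        = 3 ^ (m - 1 - (k : ℕ)) * 3 ^ n := by
      rw [← pow_add]
      congr 1
      simp only [Fin.coe_castAdd]
      omega
    rw [this]
    ring
  · rw [ic]
    apply Finset.sum_congr rfl
    intro k _
    rw [Fin.append_right]
    congr 2
    simp only [Fin.coe_natAdd]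
    omega

lemma mem_subWords {m' n : ℕ} (w : Word m') (u : Word (m' + n)) :
    u ∈ subWords n w ↔ ∃ v : Word n, u = Fin.append w v := Iff.rfl

end AuxAppend
section AuxPhi

lemma clamp_lip (a b : ℝ) : |max 0 (min 1 a) - max 0 (min 1 b)| ≤ |a - b| := by
  have hmin : |min 1 a - min 1 b| ≤ |a - b| := by
    have h := abs_max_sub_max_le_abs (-a) (-b) (-1)
    rw [max_neg_neg, max_neg_neg] at h
    rw [show -a - -b = -(a - b) by ring, abs_neg] at h
    calc |min 1 a - min 1 b| = |min a 1 - min b 1| := by rw [min_comm 1 a, min_comm 1 b]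
      _ = |(-(min a 1)) - (-(min b 1))| := by
          rw [show (-(min a 1)) - (-(min b 1)) = -(min a 1 - min b 1) by ring, abs_neg]
      _ ≤ |a - b| := h
  have hmax := abs_max_sub_max_le_abs (min 1 a) (min 1 b) 0
  rw [max_comm (min 1 a) 0, max_comm (min 1 b) 0] at hmax
  exact hmax.trans hmin

lemma abs_min_sub_min_le {a b a' b' c : ℝ} (h1 : |a - a'| ≤ c) (h2 : |b - b'| ≤ c) :
    |min a b - min a' b'| ≤ c := by
  rw [abs_le] at h1 h2 ⊢
  constructor
  · have : min a' b' ≤ min (a + c) (b + c) :=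
      min_le_min (by linarith) (by linarith)
    rw [min_add_add_right a b c] at this
    linarith
  · have : min a b ≤ min (a' + c) (b' + c) :=
      min_le_min (by linarith) (by linarith)
    rw [min_add_add_right a' b' c] at this
    linarith

/-- clamped linear profile -/
noncomputable def phi (n : ℕ) (d : ℤ) : ℝ :=
  max 0 (min 1 (((3 ^ (n + 1) - 2 * |d| : ℤ) : ℝ) / (2 * 3 ^ n)))

lemma phi_nonneg (n : ℕ) (d : ℤ) : 0 ≤ phi n d := le_max_left _ _

lemma phi_eq_one {n : ℕ} {d : ℤ} (h : 2 * |d| ≤ 3 ^ n - 1) : phi n d = 1 := by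
  have hpos : (0:ℝ) < 2 * 3 ^ n := by positivity
  have hnum : (2 * 3 ^ n : ℤ) ≤ 3 ^ (n + 1) - 2 * |d| := by
    have : (3:ℤ) ^ (n + 1) = 3 * 3 ^ n := by ring
    omega
  have h1 : (1:ℝ) ≤ ((3 ^ (n + 1) - 2 * |d| : ℤ) : ℝ) / (2 * 3 ^ n) := by
    rw [le_div_iff₀ hpos]
    have : ((2 * 3 ^ n : ℤ) : ℝ) ≤ ((3 ^ (n + 1) - 2 * |d| : ℤ) : ℝ) := by exact_mod_cast hnum
    push_cast at this ⊢
    linarith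
  rw [phi, min_eq_left h1, max_eq_right (by norm_num : (0:ℝ) ≤ 1)]

lemma phi_eq_zero {n : ℕ} {d : ℤ} (h : 3 ^ (n + 1) + 1 ≤ 2 * |d|) : phi n d = 0 := by
  have hpos : (0:ℝ) < 2 * 3 ^ n := by positivity
  have h1 : ((3 ^ (n + 1) - 2 * |d| : ℤ) : ℝ) / (2 * 3 ^ n) ≤ 0 := by
    apply div_nonpos_of_nonpos_of_nonneg _ (le_of_lt hpos)
    have : (3 ^ (n + 1) - 2 * |d| : ℤ) ≤ -1 := by linarith
    have : ((3 ^ (n + 1) - 2 * |d| : ℤ) : ℝ) ≤ -1 := by exact_mod_cast this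
    linarith
  rw [phi, max_eq_left ((min_le_right _ _).trans h1)]

lemma phi_ne_zero_bound {n : ℕ} {d : ℤ} (h : phi n d ≠ 0) : 2 * |d| ≤ 3 ^ (n + 1) - 1 := by
  by_contra hc
  push_neg at hc
  obtain ⟨t, ht⟩ : Odd ((3:ℤ) ^ (n + 1)) := Odd.pow (by decide)
  have h1 : t < |d| := by linarith
  have h2 : t + 1 ≤ |d| := Int.add_one_le_iff.mpr h1
  have : 3 ^ (n + 1) + 1 ≤ 2 * |d| := by linarith
  exact h (phi_eq_zero this)

lemma phi_lip {n : ℕ} {d d' : ℤ} (h : |d - d'| ≤ 1) :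
    |phi n d - phi n d'| ≤ ((3:ℝ) ^ n)⁻¹ := by
  have hpos : (0:ℝ) < 2 * 3 ^ n := by positivity
  have hkey := clamp_lip (((3 ^ (n + 1) - 2 * |d| : ℤ) : ℝ) / (2 * 3 ^ n))
    (((3 ^ (n + 1) - 2 * |d'| : ℤ) : ℝ) / (2 * 3 ^ n))
  refine le_trans hkey ?_
  rw [div_sub_div_same, abs_div, abs_of_pos hpos]
  rw [div_le_iff₀ hpos]
  have hZ : |(3 ^ (n + 1) - 2 * |d| : ℤ) - (3 ^ (n + 1) - 2 * |d'| : ℤ)| ≤ 2 := by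
    have := abs_sub_abs_le_abs_sub d d'
    have h2 : |(|d| - |d'|)| ≤ |d - d'| := abs_abs_sub_abs_le_abs_sub d d'
    have : (3 ^ (n + 1) - 2 * |d| : ℤ) - (3 ^ (n + 1) - 2 * |d'|) = -(2 * (|d| - |d'|)) := by ring
    rw [this, abs_neg, abs_mul]
    have : |(2:ℤ)| = 2 := by decide
    rw [this]
    omega
  have hZR : |((3 ^ (n + 1) - 2 * |d| : ℤ) : ℝ) - ((3 ^ (n + 1) - 2 * |d'| : ℤ) : ℝ)| ≤ 2 := by
    rw [← Int.cast_sub, ← Int.cast_abs]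
    exact_mod_cast hZ
  have h3 : ((3:ℝ) ^ n)⁻¹ * (2 * 3 ^ n) = 2 := by
    field_simp
  rw [h3]
  exact hZR

end AuxPhi
section AuxTestF

lemma fin_two_or (j : Fin 2) : j = 0 ∨ j = 1 := by
  revert j; decide

/-- Test function for the conductance bound. -/
noncomputable def testF {m n : ℕ} (w : Word (m + 1)) (u : Word (m + 1 + n)) : ℝ :=
  min (phi n (ic u 0 - 3 ^ n * ic w 0)) (phi n (ic u 1 - 3 ^ n * ic w 1))

lemma testF_nonneg {m n : ℕ} (w : Word (m + 1)) (u : Word (m + 1 + n)) : 0 ≤ testF w u :=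
  le_min (phi_nonneg _ _) (phi_nonneg _ _)

lemma testF_eq_one {m n : ℕ} (w : Word (m + 1)) (u : Word (m + 1 + n))
    (hu : u ∈ subWords n w) : testF w u = 1 := by
  obtain ⟨v, rfl⟩ := hu
  have key : ∀ j : Fin 2, phi n (ic (Fin.append w v) j - 3 ^ n * ic w j) = 1 := by
    intro j
    rw [ic_append]
    have h := ic_abs_le v j
    apply phi_eq_one
    have : 3 ^ n * ic w j + ic v j - 3 ^ n * ic w j = ic v j := by ring
    rw [this]
    linarith
  rw [testF, key 0, key 1, min_self]

lemma testF_eq_zero {m n : ℕ} (w : Word (m + 1)) (u : Word (m + 1 + n))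
    (hu : u ∉ nbhdWords n w) : testF w u = 0 := by
  set v : Word (m + 1) := preW u with hv
  have hsub : u ∈ subWords n v := ⟨sufW u, (append_pre_suf u).symm⟩
  have hvw : ¬(v = w ∨ (carpetGraph (m + 1)).Adj v w) := by
    intro hor
    exact hu ⟨v, hor, hsub⟩
  push_neg at hvw
  obtain ⟨hne, hnadj⟩ := hvw
  have hfar : ∃ j : Fin 2, 2 ≤ |ic v j - ic w j| := by
    by_contra hc
    push_neg at hc
    apply hnadj
    refine carpetGraph_adj.mpr ⟨hne, close_cells_intersect fun j => ?_⟩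
    have := hc j
    omega
  obtain ⟨j, hj⟩ := hfar
  have hphi : phi n (ic u j - 3 ^ n * ic w j) = 0 := by
    apply phi_eq_zero
    have hu_eq : ic u j = 3 ^ n * ic v j + ic (sufW u) j := by
      conv_lhs => rw [← append_pre_suf u]
      rw [ic_append]
    have hs := ic_abs_le (sufW u) j
    have h3 : (0:ℤ) < 3 ^ n := by positivity
    have h1 : ic u j - 3 ^ n * ic w j = 3 ^ n * (ic v j - ic w j) + ic (sufW u) j := by
      rw [hu_eq]; ring
    have h2 : 2 * 3 ^ n ≤ |3 ^ n * (ic v j - ic w j)| := by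
      rw [abs_mul, abs_pow, show |(3:ℤ)| = 3 from rfl]
      nlinarith
    have h4 : |3 ^ n * (ic v j - ic w j)| - |ic (sufW u) j| ≤ |ic u j - 3 ^ n * ic w j| := by
      rw [h1]
      have := abs_add_le (3 ^ n * (ic v j - ic w j) + ic (sufW u) j) (-(ic (sufW u) j))
      simp only [add_neg_cancel_right, abs_neg] at this
      linarith
    have h5 : (3:ℤ) ^ (n + 1) = 3 * 3 ^ n := by ring
    linarith
  have hmin : testF w u ≤ 0 := by
    rcases fin_two_or j with rfl | rfl
    · rw [← hphi]; exact min_le_left _ _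
    · rw [← hphi]; exact min_le_right _ _
  exact le_antisymm hmin (testF_nonneg w u)

lemma testF_lip {m n : ℕ} (w : Word (m + 1)) {u u' : Word (m + 1 + n)}
    (h : (carpetGraph (m + 1 + n)).Adj u u') :
    |testF w u - testF w u'| ≤ ((3:ℝ) ^ n)⁻¹ := by
  have hclose : ∀ j : Fin 2, |(ic u j - 3 ^ n * ic w j) - (ic u' j - 3 ^ n * ic w j)| ≤ 1 := by
    intro j
    have := cells_intersect_ic_close (carpetGraph_adj.mp h).2 j
    have heq : (ic u j - 3 ^ n * ic w j) - (ic u' j - 3 ^ n * ic w j) = ic u j - ic u' j := by ring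
    rw [heq]
    exact this
  exact abs_min_sub_min_le (phi_lip (hclose 0)) (phi_lip (hclose 1))

lemma testF_supp {m n : ℕ} (w : Word (m + 1)) (u : Word (m + 1 + n))
    (h : testF w u ≠ 0) (j : Fin 2) : |ic (preW u) j - ic w j| ≤ 1 := by
  have hphi : phi n (ic u j - 3 ^ n * ic w j) ≠ 0 := by
    intro h0
    apply h
    have hmin : testF w u ≤ 0 := by
      rcases fin_two_or j with rfl | rfl
      · rw [← h0]; exact min_le_left _ _
      · rw [← h0]; exact min_le_right _ _
    exact le_antisymm hmin (testF_nonneg w u)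
  have hb := phi_ne_zero_bound hphi
  have hu_eq : ic u j = 3 ^ n * ic (preW u) j + ic (sufW u) j := by
    conv_lhs => rw [← append_pre_suf u]
    rw [ic_append]
  have hs := ic_abs_le (sufW u) j
  have h3 : (0:ℤ) < 3 ^ n := by positivity
  have h5 : (3:ℤ) ^ (n + 1) = 3 * 3 ^ n := by ring
  by_contra hc
  push_neg at hc
  have h2 : 2 ≤ |ic (preW u) j - ic w j| := hc
  have hlow : 2 * 3 ^ n ≤ |3 ^ n * (ic (preW u) j - ic w j)| := by
    rw [abs_mul, abs_pow, show |(3:ℤ)| = 3 from rfl]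
    nlinarith
  have h1 : ic u j - 3 ^ n * ic w j = 3 ^ n * (ic (preW u) j - ic w j) + ic (sufW u) j := by
    rw [hu_eq]; ring
  have h4 : |3 ^ n * (ic (preW u) j - ic w j)| - |ic (sufW u) j| ≤ |ic u j - 3 ^ n * ic w j| := by
    rw [h1]
    have := abs_add_le (3 ^ n * (ic (preW u) j - ic w j) + ic (sufW u) j) (-(ic (sufW u) j))
    simp only [add_neg_cancel_right, abs_neg] at this
    linarith
  linarith

end AuxTestF
section AuxCount
open scoped Classical

lemma deg_le_nine {N : ℕ} (x : Word N) :
    (Finset.univ.filter fun y => (carpetGraph N).Adj x y).card ≤ 9 := by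
  classical
  have hcard : ((Finset.Icc (-1:ℤ) 1) ×ˢ (Finset.Icc (-1:ℤ) 1)).card = 9 := by
    rw [Finset.card_product, Int.card_Icc]
    rfl
  rw [← hcard]
  apply Finset.card_le_card_of_injOn (fun y => (ic y 0 - ic x 0, ic y 1 - ic x 1))
  · intro y hy
    rw [Finset.mem_coe, Finset.mem_filter] at hy
    have h0 := cells_intersect_ic_close (carpetGraph_adj.mp hy.2).2 (0 : Fin 2)
    have h1 := cells_intersect_ic_close (carpetGraph_adj.mp hy.2).2 (1 : Fin 2)
    rw [Finset.mem_coe, Finset.mem_product, Finset.mem_Icc, Finset.mem_Icc]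
    rw [abs_le] at h0 h1
    dsimp only
    exact ⟨⟨by linarith [h0.1], by linarith [h0.2]⟩, ⟨by linarith [h1.1], by linarith [h1.2]⟩⟩
  · intro y _ y' _ heq
    simp only [Prod.mk.injEq] at heq
    apply ic_inj
    intro j
    rcases fin_two_or j with rfl | rfl
    · linarith [heq.1]
    · linarith [heq.2]

lemma support_card {m n : ℕ} (w : Word (m + 1)) :
    (Finset.univ.filter fun u : Word (m + 1 + n) => testF w u ≠ 0).card ≤ 9 * 8 ^ n := by
  classical
  have hcard : ((((Finset.Icc (-1:ℤ) 1) ×ˢ (Finset.Icc (-1:ℤ) 1))) ×ˢ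
      (Finset.univ : Finset (Word n))).card = 9 * 8 ^ n := by
    rw [Finset.card_product, Finset.card_product, Int.card_Icc, Finset.card_univ]
    have h8 : Fintype.card (Word n) = 8 ^ n := by
      simp [Fintype.card_fun]
    rw [h8]
    rfl
  rw [← hcard]
  apply Finset.card_le_card_of_injOn
    (fun u => ((ic (preW u) 0 - ic w 0, ic (preW u) 1 - ic w 1), sufW u))
  · intro u hu
    rw [Finset.mem_coe, Finset.mem_filter] at hu
    have h0 := testF_supp w u hu.2 0
    have h1 := testF_supp w u hu.2 1
    rw [Finset.mem_coe, Finset.mem_product, Finset.mem_product, Finset.mem_Icc, Finset.mem_Icc]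
    rw [abs_le] at h0 h1
    dsimp only
    exact ⟨⟨⟨by linarith [h0.1], by linarith [h0.2]⟩,
      ⟨by linarith [h1.1], by linarith [h1.2]⟩⟩, Finset.mem_univ _⟩
  · intro u _ u' _ heq
    simp only [Prod.mk.injEq] at heq
    have hpre : preW u = preW u' := by
      apply ic_inj
      intro j
      rcases fin_two_or j with rfl | rfl
      · linarith [heq.1.1]
      · linarith [heq.1.2]
    have hsuf : sufW u = sufW u' := heq.2
    rw [← append_pre_suf u, ← append_pre_suf u', hpre, hsuf]

lemma gEnergy_nonneg (p : ℝ) {V : Type} [Fintype V] (G : SimpleGraph V) (f : V → ℝ) :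
    0 ≤ gEnergy p G f := by
  rw [gEnergy]
  apply mul_nonneg (by norm_num)
  apply Finset.sum_nonneg
  intro x _
  apply Finset.sum_nonneg
  intro y _
  split
  · exact Real.rpow_nonneg (abs_nonneg _) p
  · exact le_refl 0

lemma gEnergy_le {p : ℝ} (hp : 0 < p) {N : ℕ} (f : Word N → ℝ) (B : ℝ) (hB : 0 ≤ B)
    (hlip : ∀ x y, (carpetGraph N).Adj x y → |f x - f y| ^ p ≤ B) :
    gEnergy p (carpetGraph N) f
      ≤ 9 * (Finset.univ.filter fun u : Word N => f u ≠ 0).card * B := by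
  classical
  set G := carpetGraph N with hG
  set T := Finset.univ.filter fun u : Word N => f u ≠ 0 with hT
  have hterm : ∀ x y : Word N, (if G.Adj x y then |f x - f y| ^ p else 0)
      ≤ (if G.Adj x y ∧ f x ≠ 0 then B else 0) + (if G.Adj x y ∧ f y ≠ 0 then B else 0) := by
    intro x y
    by_cases hadj : G.Adj x y
    · by_cases hx : f x ≠ 0
      · rw [if_pos hadj, if_pos ⟨hadj, hx⟩]
        have h1 := hlip x y hadj
        have h2 : (0:ℝ) ≤ if G.Adj x y ∧ f y ≠ 0 then B else 0 := by positivity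
        linarith
      · by_cases hy : f y ≠ 0
        · rw [if_pos hadj, if_neg (fun hc => (hc.2 : f x ≠ 0) (by push_neg at hx; exact hx)),
            if_pos ⟨hadj, hy⟩]
          have h1 := hlip x y hadj
          linarith
        · push_neg at hx hy
          rw [if_pos hadj, if_neg (by tauto), if_neg (by tauto), hx, hy]
          rw [sub_zero, abs_zero, Real.zero_rpow (ne_of_gt hp)]
          norm_num
    · rw [if_neg hadj, if_neg (by tauto), if_neg (by tauto)]
      positivity
  have hsum1 : ∀ x : Word N, (∑ y : Word N, if G.Adj x y ∧ f x ≠ 0 then B else 0)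
      ≤ (if f x ≠ 0 then 9 * B else 0) := by
    intro x
    by_cases hx : f x ≠ 0
    · rw [if_pos hx]
      have he : (∑ y : Word N, if G.Adj x y ∧ f x ≠ 0 then B else 0)
          = ∑ y ∈ Finset.univ.filter (fun y => G.Adj x y), B := by
        rw [Finset.sum_filter]
        apply Finset.sum_congr rfl
        intro y _
        by_cases h : G.Adj x y <;> simp [h, hx]
      rw [he, Finset.sum_const, nsmul_eq_mul]
      have hd := deg_le_nine (N := N) x
      apply mul_le_mul_of_nonneg_right _ hB
      exact_mod_cast hd
    · rw [if_neg hx]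
      have he : ∀ y : Word N, (if G.Adj x y ∧ f x ≠ 0 then B else 0) = 0 :=
        fun y => if_neg (by tauto)
      rw [Finset.sum_congr rfl fun y _ => he y, Finset.sum_const, smul_zero]
  have hsum2 : ∀ y : Word N, (∑ x : Word N, if G.Adj x y ∧ f y ≠ 0 then B else 0)
      ≤ (if f y ≠ 0 then 9 * B else 0) := by
    intro y
    by_cases hy : f y ≠ 0
    · rw [if_pos hy]
      have he : (∑ x : Word N, if G.Adj x y ∧ f y ≠ 0 then B else 0)
          = ∑ x ∈ Finset.univ.filter (fun x => G.Adj y x), B := by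
        rw [Finset.sum_filter]
        apply Finset.sum_congr rfl
        intro x _
        rw [G.adj_comm]
        by_cases h : G.Adj y x <;> simp [h, hy]
      rw [he, Finset.sum_const, nsmul_eq_mul]
      have hd := deg_le_nine (N := N) y
      apply mul_le_mul_of_nonneg_right _ hB
      exact_mod_cast hd
    · rw [if_neg hy]
      have he : ∀ x : Word N, (if G.Adj x y ∧ f y ≠ 0 then B else 0) = 0 :=
        fun x => if_neg (by tauto)
      rw [Finset.sum_congr rfl fun x _ => he x, Finset.sum_const, smul_zero]
  have hcount : (∑ x : Word N, if f x ≠ 0 then 9 * B else 0) = T.card * (9 * B) := by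
    rw [← Finset.sum_filter, Finset.sum_const, nsmul_eq_mul]
  have hmain : (∑ x : Word N, ∑ y : Word N, if G.Adj x y then |f x - f y| ^ p else 0)
      ≤ 2 * (T.card * (9 * B)) := by
    calc (∑ x : Word N, ∑ y : Word N, if G.Adj x y then |f x - f y| ^ p else 0)
        ≤ ∑ x : Word N, ∑ y : Word N,
            ((if G.Adj x y ∧ f x ≠ 0 then B else 0) + (if G.Adj x y ∧ f y ≠ 0 then B else 0)) :=
          Finset.sum_le_sum fun x _ => Finset.sum_le_sum fun y _ => hterm x y
      _ = (∑ x : Word N, ∑ y : Word N, if G.Adj x y ∧ f x ≠ 0 then B else 0)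
          + (∑ x : Word N, ∑ y : Word N, if G.Adj x y ∧ f y ≠ 0 then B else 0) := by
          rw [← Finset.sum_add_distrib]
          apply Finset.sum_congr rfl
          intro x _
          rw [← Finset.sum_add_distrib]
      _ ≤ (∑ x : Word N, if f x ≠ 0 then 9 * B else 0)
          + (∑ y : Word N, if f y ≠ 0 then 9 * B else 0) := by
          apply add_le_add
          · exact Finset.sum_le_sum fun x _ => hsum1 x
          · rw [Finset.sum_comm]
            exact Finset.sum_le_sum fun y _ => hsum2 y
      _ = 2 * (T.card * (9 * B)) := by rw [hcount]; ring
  rw [gEnergy]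
  calc (1/2 : ℝ) * (∑ x : Word N, ∑ y : Word N, if G.Adj x y then |f x - f y| ^ p else 0)
      ≤ (1/2 : ℝ) * (2 * (T.card * (9 * B))) := by linarith
    _ = 9 * T.card * B := by ring

lemma cond_le (p : ℝ) (hp : 1 < p) (n m : ℕ) (w : Word (m + 1)) :
    gCond p (carpetGraph (m + 1 + n)) (subWords n w) (nbhdWords n w)ᶜ
      ≤ 81 * (8 * (3:ℝ) ^ (-p)) ^ n := by
  classical
  have hp0 : (0:ℝ) < p := by linarith
  set B : ℝ := (((3:ℝ) ^ n)⁻¹) ^ p with hB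
  have hBnn : 0 ≤ B := Real.rpow_nonneg (by positivity) p
  have hlip : ∀ x y, (carpetGraph (m + 1 + n)).Adj x y →
      |testF w x - testF w y| ^ p ≤ B := by
    intro x y hadj
    exact Real.rpow_le_rpow (abs_nonneg _) (testF_lip w hadj) (le_of_lt hp0)
  have h2 := gEnergy_le hp0 (testF w) B hBnn hlip
  have h3 : gEnergy p (carpetGraph (m + 1 + n)) (testF w) ≤ 81 * 8 ^ n * B := by
    have hc := support_card (n := n) w
    have hc' : ((Finset.univ.filter fun u : Word (m + 1 + n) => testF w u ≠ 0).card : ℝ)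
        ≤ (9 * 8 ^ n : ℕ) := by exact_mod_cast hc
    push_cast at hc'
    nlinarith [hBnn]
  have h1 : gCond p (carpetGraph (m + 1 + n)) (subWords n w) (nbhdWords n w)ᶜ
      ≤ gEnergy p (carpetGraph (m + 1 + n)) (testF w) := by
    apply csInf_le
    · refine ⟨0, fun e he => ?_⟩
      obtain ⟨f, _, _, rfl⟩ := he
      exact gEnergy_nonneg p _ f
    · exact ⟨testF w, fun x hx => testF_eq_one w x hx,
        fun x hx => testF_eq_zero w x hx, rfl⟩
  have hfinal : (81:ℝ) * 8 ^ n * B = 81 * (8 * (3:ℝ) ^ (-p)) ^ n := by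
    rw [mul_pow]
    have hBval : B = ((3:ℝ) ^ (-p)) ^ n := by
      rw [hB, ← Real.rpow_natCast (3:ℝ) n, ← Real.rpow_neg (by norm_num : (0:ℝ) ≤ 3),
        ← Real.rpow_natCast ((3:ℝ) ^ (-p)) n,
        ← Real.rpow_mul (by norm_num : (0:ℝ) ≤ 3), ← Real.rpow_mul (by norm_num : (0:ℝ) ≤ 3)]
      congr 1
      ring
    rw [hBval]
    ring
  rw [← hfinal]
  linarith

lemma Cpn_le (p : ℝ) (hp : 1 < p) (n : ℕ) :
    Cpn p n ≤ 81 * (8 * (3:ℝ) ^ (-p)) ^ n := by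
  have ha : (0:ℝ) ≤ 81 * (8 * (3:ℝ) ^ (-p)) ^ n := by positivity
  apply Real.iSup_le _ ha
  intro m
  apply Real.iSup_le _ ha
  intro w
  exact cond_le p hp n m w

end AuxCount
section AuxPath

/-- Sum of powers of three. -/
def SInt (N : ℕ) : ℤ := ∑ k : Fin N, (3:ℤ) ^ (N - 1 - (k:ℕ))

lemma SInt_succ (N : ℕ) : SInt (N + 1) = 3 ^ N + SInt N := by
  have htail : SInt N = ∑ k : Fin N, (3:ℤ) ^ (N + 1 - 1 - ((k.succ : Fin (N+1)) : ℕ)) := by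
    rw [SInt]
    apply Finset.sum_congr rfl
    intro k _
    congr 1
    simp only [Fin.val_succ]
    omega
  rw [SInt, Fin.sum_univ_succ, ← htail]
  norm_num

lemma SInt_val (N : ℕ) : 2 * SInt N = 3 ^ N - 1 := by
  induction N with
  | zero => rw [SInt]; simp
  | succ N ih =>
    rw [SInt_succ]
    have h : (3:ℤ) ^ (N + 1) = 3 * 3 ^ N := by ring
    linarith

lemma ic_const {N : ℕ} (c : Fin 8) (j : Fin 2) :
    ic (fun _ => c : Word N) j = dig c j * SInt N := by
  rw [ic, SInt, Finset.mul_sum]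

/-- The bottom-row path of words. -/
def pathW (N : ℕ) (j : ℕ) : Word N :=
  fun k => ⟨j / 3 ^ (N - 1 - (k:ℕ)) % 3, by omega⟩

lemma digit_mod_pow (j N e : ℕ) (he : e < N) :
    j / 3 ^ e % 3 = (j % 3 ^ N) / 3 ^ e % 3 := by
  conv_lhs => rw [← Nat.div_add_mod j (3 ^ N)]
  have h1 : 3 ^ N * (j / 3 ^ N) = 3 ^ e * (3 ^ (N - e) * (j / 3 ^ N)) := by
    rw [← mul_assoc, ← pow_add]
    congr 2
    omega
  rw [h1, add_comm]
  rw [Nat.add_mul_div_left _ _ (by positivity : 0 < 3 ^ e)]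
  have h2 : 3 ^ (N - e) * (j / 3 ^ N) = 3 * (3 ^ (N - e - 1) * (j / 3 ^ N)) := by
    rw [← mul_assoc]
    congr 1
    rw [← pow_succ']
    congr 1
    omega
  rw [h2, Nat.add_mul_mod_self_left]

lemma digit_sum : ∀ (N j : ℕ), j < 3 ^ N →
    (∑ k : Fin N, (j / 3 ^ (N - 1 - (k:ℕ)) % 3) * 3 ^ (N - 1 - (k:ℕ))) = j := by
  intro N
  induction N with
  | zero => intro j hj; interval_cases j; simp
  | succ N ih =>
    intro j hj
    rw [Fin.sum_univ_succ]
    have hhead : (j / 3 ^ (N + 1 - 1 - ((0 : Fin (N+1)) : ℕ)) % 3)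
          * 3 ^ (N + 1 - 1 - ((0 : Fin (N+1)) : ℕ))
        = (j / 3 ^ N) * 3 ^ N := by
      have h0 : N + 1 - 1 - ((0 : Fin (N+1)) : ℕ) = N := rfl
      rw [h0]
      congr 1
      apply Nat.mod_eq_of_lt
      rw [Nat.div_lt_iff_lt_mul (by positivity : 0 < 3 ^ N)]
      calc j < 3 ^ (N + 1) := hj
        _ = 3 * 3 ^ N := by ring
    have htail : (∑ k : Fin N, (j / 3 ^ (N + 1 - 1 - ((k.succ : Fin (N+1)) : ℕ)) % 3)
          * 3 ^ (N + 1 - 1 - ((k.succ : Fin (N+1)) : ℕ)))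
        = j % 3 ^ N := by
      have hlt : j % 3 ^ N < 3 ^ N := Nat.mod_lt _ (by positivity)
      rw [← ih (j % 3 ^ N) hlt]
      apply Finset.sum_congr rfl
      intro k _
      have he : N + 1 - 1 - ((k.succ : Fin (N+1)) : ℕ) = N - 1 - (k : ℕ) := by
        simp only [Fin.val_succ]
        omega
      rw [he, digit_mod_pow j N (N - 1 - (k : ℕ)) (by have := k.2; omega)]
    rw [hhead, htail]
    calc j / 3 ^ N * 3 ^ N + j % 3 ^ N = 3 ^ N * (j / 3 ^ N) + j % 3 ^ N := by ring
      _ = j := Nat.div_add_mod j (3 ^ N)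

lemma dig_lt3 : ∀ (c : Fin 8), (c:ℕ) < 3 → dig c 0 = ((c:ℕ):ℤ) - 1 ∧ dig c 1 = -1 := by
  decide

lemma pathW_val {N : ℕ} (j : ℕ) (k : Fin N) :
    ((pathW N j k : Fin 8) : ℕ) = j / 3 ^ (N - 1 - (k:ℕ)) % 3 := rfl

lemma pathW_lt3 {N : ℕ} (j : ℕ) (k : Fin N) : ((pathW N j k : Fin 8) : ℕ) < 3 := by
  rw [pathW_val]
  exact Nat.mod_lt _ (by norm_num)

lemma dig_path0 {N : ℕ} (j : ℕ) (k : Fin N) :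
    dig (pathW N j k) 0 = ((j / 3 ^ (N - 1 - (k:ℕ)) % 3 : ℕ) : ℤ) - 1 := by
  have := (dig_lt3 (pathW N j k) (pathW_lt3 j k)).1
  rw [this, pathW_val]

lemma dig_path1 {N : ℕ} (j : ℕ) (k : Fin N) : dig (pathW N j k) 1 = -1 :=
  (dig_lt3 (pathW N j k) (pathW_lt3 j k)).2

lemma ic_path0 {N : ℕ} {j : ℕ} (hj : j < 3 ^ N) : ic (pathW N j) 0 = (j : ℤ) - SInt N := by
  rw [ic]
  have h1 : ∀ k : Fin N, dig (pathW N j k) 0 * 3 ^ (N - 1 - (k:ℕ))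
      = ((j / 3 ^ (N - 1 - (k:ℕ)) % 3 : ℕ) : ℤ) * 3 ^ (N - 1 - (k:ℕ)) - 3 ^ (N - 1 - (k:ℕ)) := by
    intro k
    rw [dig_path0]
    ring
  rw [Finset.sum_congr rfl fun k _ => h1 k, Finset.sum_sub_distrib]
  have h2 : (∑ k : Fin N, ((j / 3 ^ (N - 1 - (k:ℕ)) % 3 : ℕ) : ℤ) * 3 ^ (N - 1 - (k:ℕ))) = (j:ℤ) := by
    have := digit_sum N j hj
    exact_mod_cast congrArg (fun t : ℕ => (t : ℤ)) this
  rw [h2, ← SInt]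

lemma ic_path1 {N : ℕ} (j : ℕ) : ic (pathW N j) 1 = -SInt N := by
  rw [ic]
  have h1 : ∀ k : Fin N, dig (pathW N j k) 1 * 3 ^ (N - 1 - (k:ℕ))
      = -(3 ^ (N - 1 - (k:ℕ))) := by
    intro k
    rw [dig_path1]
    ring
  rw [Finset.sum_congr rfl fun k _ => h1 k, Finset.sum_neg_distrib, ← SInt]

lemma path_adj {N : ℕ} {j : ℕ} (hj : j + 1 < 3 ^ N) :
    (carpetGraph N).Adj (pathW N j) (pathW N (j + 1)) := by
  have hj' : j < 3 ^ N := by omega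
  rw [carpetGraph_adj]; constructor
  · intro heq
    have := congrArg (fun u : Word N => ic u 0) heq
    rw [ic_path0 hj', ic_path0 hj] at this
    push_cast at this
    linarith
  · refine ⟨wordMap (pathW N j) (fixedPt 2), corner_mem_cell _ 2, ?_⟩
    have hkey : wordMap (pathW N j) (fixedPt 2) = wordMap (pathW N (j + 1)) (fixedPt 0) := by
      ext jj
      rw [wordMap_apply, wordMap_apply, fixedPt_apply, fixedPt_apply]
      rcases fin_two_or jj with rfl | rfl
      · rw [ic_path0 hj', ic_path0 hj]
        have hd2 : dig 2 0 = 1 := rfl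
        have hd0 : dig 0 0 = -1 := rfl
        rw [hd2, hd0]
        push_cast
        ring_nf
      · rw [ic_path1, ic_path1]
        have hd2 : dig 2 1 = -1 := rfl
        have hd0 : dig 0 1 = -1 := rfl
        rw [hd2, hd0]
    rw [hkey]
    exact corner_mem_cell _ 0

lemma path_zero {N : ℕ} : pathW N 0 = (fun _ => 0 : Word N) := by
  funext k
  apply Fin.ext
  show 0 / 3 ^ (N - 1 - (k:ℕ)) % 3 = _
  rw [Nat.zero_div]
  rfl

lemma path_last {N : ℕ} : pathW N (3 ^ N - 1) = (fun _ => 2 : Word N) := by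
  have h1 : (1:ℕ) ≤ 3 ^ N := Nat.one_le_pow _ _ (by norm_num)
  apply ic_inj
  intro j
  rcases fin_two_or j with rfl | rfl
  · rw [ic_path0 (by omega : 3 ^ N - 1 < 3 ^ N), ic_const]
    have hd : dig 2 0 = 1 := rfl
    rw [hd, one_mul]
    have hS := SInt_val N
    have hcast : ((3 ^ N - 1 : ℕ) : ℤ) = 3 ^ N - 1 := by push_cast [h1]; ring
    rw [hcast]
    linarith
  · rw [ic_path1, ic_const]
    have hd : dig 2 1 = -1 := rfl
    rw [hd]
    ring

end AuxPath
section AuxLower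
open Filter

lemma telescope_abs (g : ℕ → ℝ) : ∀ L : ℕ, |g 0 - g L| ≤ ∑ j ∈ Finset.range L, |g j - g (j + 1)| := by
  intro L
  induction L with
  | zero => simp
  | succ L ih =>
    rw [Finset.sum_range_succ]
    calc |g 0 - g (L + 1)| ≤ |g 0 - g L| + |g L - g (L + 1)| := abs_sub_le _ _ _
      _ ≤ _ := by linarith

lemma const_zero_eq_append {n : ℕ} :
    (fun _ => 0 : Word (0 + 1 + n)) = Fin.append (fun _ => 0 : Word (0 + 1)) (fun _ => 0 : Word n) := by
  funext i
  refine Fin.addCases (fun i' => ?_) (fun i' => ?_) i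
  · rw [Fin.append_left]
  · rw [Fin.append_right]

lemma zero_mem_sub {n : ℕ} :
    pathW (0 + 1 + n) 0 ∈ subWords n (fun _ => 0 : Word (0 + 1)) := by
  rw [path_zero]
  exact ⟨fun _ => 0, const_zero_eq_append⟩

lemma last_not_mem_nbhd {n : ℕ} :
    (fun _ => 2 : Word (0 + 1 + n)) ∉ nbhdWords n (fun _ => 0 : Word (0 + 1)) := by
  rintro ⟨v, hcond, x, happ⟩
  have hv : v = (fun _ => 2 : Word (0 + 1)) := by
    funext i
    have h := congrFun happ (Fin.castAdd n i)
    rw [Fin.append_left] at h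
    exact h.symm
  have hS1 : SInt (0 + 1) = 1 := by rw [SInt_succ, SInt]; simp
  have hic2 : ic (fun _ => 2 : Word (0 + 1)) 0 = 1 := by
    rw [ic_const, hS1]; rfl
  have hic0 : ic (fun _ => 0 : Word (0 + 1)) 0 = -1 := by
    rw [ic_const, hS1]; rfl
  rcases hcond with hvw | hadj
  · rw [hvw] at hv
    have := congrFun hv 0
    simp at this
  · rw [hv] at hadj
    have hclose := cells_intersect_ic_close (carpetGraph_adj.mp hadj).2 0
    rw [hic2, hic0] at hclose
    norm_num at hclose

lemma gCond_lower (p : ℝ) (hp : 1 < p) (n : ℕ) :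
    (((3 ^ (0 + 1 + n) - 1 : ℕ) : ℝ))⁻¹ ^ p
      ≤ gCond p (carpetGraph (0 + 1 + n)) (subWords n (fun _ => 0 : Word (0 + 1)))
          (nbhdWords n (fun _ => 0 : Word (0 + 1)))ᶜ := by
  classical
  have h3N : 3 ≤ 3 ^ (0 + 1 + n) := by
    calc (3:ℕ) = 3 ^ 1 := by norm_num
      _ ≤ 3 ^ (0 + 1 + n) := Nat.pow_le_pow_right (by norm_num) (by omega)
  set L : ℕ := 3 ^ (0 + 1 + n) - 1 with hL
  have hL2 : 2 ≤ L := by omega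
  have hLR : (0:ℝ) < (L:ℝ) := by exact_mod_cast (by omega : 0 < L)
  have hp0 : (0:ℝ) ≤ p := by linarith
  apply le_csInf
  · refine ⟨gEnergy p (carpetGraph (0 + 1 + n))
      (fun u => if u ∈ subWords n (fun _ => 0 : Word (0 + 1)) then 1 else 0),
      (fun u => if u ∈ subWords n (fun _ => 0 : Word (0 + 1)) then 1 else 0),
      fun x hx => if_pos hx, fun x hx => ?_, rfl⟩
    refine if_neg (fun hmem => hx ?_)
    exact ⟨_, Or.inl rfl, hmem⟩
  · rintro b ⟨f, hA, hB, rfl⟩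
    have hf0 : f (pathW (0 + 1 + n) 0) = 1 := hA _ zero_mem_sub
    have hfL : f (pathW (0 + 1 + n) L) = 0 := by
      apply hB
      have hpl : pathW (0 + 1 + n) L = (fun _ => 2 : Word (0 + 1 + n)) := by
        rw [hL]; exact path_last
      rw [hpl]
      exact last_not_mem_nbhd
    have htel := telescope_abs (fun j => f (pathW (0 + 1 + n) j)) L
    simp only [hf0, hfL, sub_zero, abs_one] at htel
    have hjump : ∃ j ∈ Finset.range L,
        ((L:ℝ))⁻¹ ≤ |f (pathW (0 + 1 + n) j) - f (pathW (0 + 1 + n) (j + 1))| := by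
      by_contra hc
      push_neg at hc
      have hne : (Finset.range L).Nonempty := Finset.nonempty_range_iff.mpr (by omega)
      have hlt := Finset.sum_lt_sum_of_nonempty hne fun j hj => hc j hj
      rw [Finset.sum_const, Finset.card_range, nsmul_eq_mul,
        mul_inv_cancel₀ (ne_of_gt hLR)] at hlt
      linarith
    obtain ⟨j, hjmem, hjge⟩ := hjump
    have hjL : j + 1 < 3 ^ (0 + 1 + n) := by
      have := Finset.mem_range.mp hjmem
      omega
    have hadj := path_adj hjL
    set a := pathW (0 + 1 + n) j with ha
    set bb := pathW (0 + 1 + n) (j + 1) with hbb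
    have hterm : ∀ x y : Word (0 + 1 + n),
        0 ≤ (if (carpetGraph (0 + 1 + n)).Adj x y then |f x - f y| ^ p else 0) := by
      intro x y
      split
      · exact Real.rpow_nonneg (abs_nonneg _) _
      · exact le_refl 0
    have hrow : ∀ x : Word (0 + 1 + n), 0 ≤ ∑ y : Word (0 + 1 + n),
        (if (carpetGraph (0 + 1 + n)).Adj x y then |f x - f y| ^ p else 0) :=
      fun x => Finset.sum_nonneg fun y _ => hterm x y
    have hrowa := Finset.single_le_sum (fun y (_ : y ∈ Finset.univ) => hterm a y) (Finset.mem_univ bb)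
    have hrowb := Finset.single_le_sum (fun y (_ : y ∈ Finset.univ) => hterm bb y) (Finset.mem_univ a)
    have hpair : (∑ y : Word (0 + 1 + n), (if (carpetGraph (0 + 1 + n)).Adj a y then |f a - f y| ^ p else 0))
        + (∑ y : Word (0 + 1 + n), (if (carpetGraph (0 + 1 + n)).Adj bb y then |f bb - f y| ^ p else 0))
        ≤ ∑ x : Word (0 + 1 + n), ∑ y : Word (0 + 1 + n),
            (if (carpetGraph (0 + 1 + n)).Adj x y then |f x - f y| ^ p else 0) := by
      have hsub : ({a, bb} : Finset (Word (0 + 1 + n))) ⊆ Finset.univ := Finset.subset_univ _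
      have hmono := Finset.sum_le_sum_of_subset_of_nonneg hsub (fun x _ _ => hrow x)
      rw [Finset.sum_pair (carpetGraph_adj.mp hadj).1] at hmono
      exact hmono
    have hval : ((L:ℝ))⁻¹ ^ p ≤ |f a - f bb| ^ p :=
      Real.rpow_le_rpow (by positivity) hjge hp0
    have hvala : (if (carpetGraph (0 + 1 + n)).Adj a bb then |f a - f bb| ^ p else 0)
        = |f a - f bb| ^ p := if_pos hadj
    have hvalb : (if (carpetGraph (0 + 1 + n)).Adj bb a then |f bb - f a| ^ p else 0)
        = |f bb - f a| ^ p := if_pos hadj.symm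
    have habs : |f bb - f a| ^ p = |f a - f bb| ^ p := by rw [abs_sub_comm]
    rw [gEnergy]
    have h2 : |f a - f bb| ^ p + |f bb - f a| ^ p
        ≤ ∑ x : Word (0 + 1 + n), ∑ y : Word (0 + 1 + n),
            (if (carpetGraph (0 + 1 + n)).Adj x y then |f x - f y| ^ p else 0) := by
      rw [← hvala, ← hvalb]
      exact le_trans (add_le_add hrowa hrowb) hpair
    rw [habs] at h2
    linarith
end AuxLower
section AuxFinal
open Filter

lemma Cpn_pos (p : ℝ) (hp : 1 < p) (n : ℕ) : 0 < Cpn p n := by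
  have hbound : ∀ (m : ℕ) (w : Word (m + 1)),
      gCond p (carpetGraph (m + 1 + n)) (subWords n w) (nbhdWords n w)ᶜ
        ≤ 81 * (8 * (3:ℝ) ^ (-p)) ^ n := fun m w => cond_le p hp n m w
  have hb0 : (0:ℝ) ≤ 81 * (8 * (3:ℝ) ^ (-p)) ^ n := by positivity
  have hinner_bdd : ∀ m : ℕ, BddAbove (Set.range fun w : Word (m + 1) =>
      gCond p (carpetGraph (m + 1 + n)) (subWords n w) (nbhdWords n w)ᶜ) := by
    intro m
    refine ⟨81 * (8 * (3:ℝ) ^ (-p)) ^ n, ?_⟩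
    rintro _ ⟨w, rfl⟩
    exact hbound m w
  have houter_bdd : BddAbove (Set.range fun m : ℕ => ⨆ w : Word (m + 1),
      gCond p (carpetGraph (m + 1 + n)) (subWords n w) (nbhdWords n w)ᶜ) := by
    refine ⟨81 * (8 * (3:ℝ) ^ (-p)) ^ n, ?_⟩
    rintro _ ⟨m, rfl⟩
    exact Real.iSup_le (fun w => hbound m w) hb0
  have hLpos : (0:ℝ) < (((3 ^ (0 + 1 + n) - 1 : ℕ) : ℝ))⁻¹ ^ p := by
    apply Real.rpow_pos_of_pos
    have h3N : 3 ≤ 3 ^ (0 + 1 + n) := by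
      calc (3:ℕ) = 3 ^ 1 := by norm_num
        _ ≤ 3 ^ (0 + 1 + n) := Nat.pow_le_pow_right (by norm_num) (by omega)
    have : (0:ℝ) < ((3 ^ (0 + 1 + n) - 1 : ℕ) : ℝ) := by exact_mod_cast (by omega : 0 < 3 ^ (0 + 1 + n) - 1)
    positivity
  apply lt_of_lt_of_le hLpos
  calc (((3 ^ (0 + 1 + n) - 1 : ℕ) : ℝ))⁻¹ ^ p
      ≤ gCond p (carpetGraph (0 + 1 + n)) (subWords n (fun _ => 0 : Word (0 + 1)))
          (nbhdWords n (fun _ => 0 : Word (0 + 1)))ᶜ := gCond_lower p hp n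
    _ ≤ ⨆ w : Word (0 + 1), gCond p (carpetGraph (0 + 1 + n)) (subWords n w) (nbhdWords n w)ᶜ :=
        le_ciSup (hinner_bdd 0) (fun _ => 0 : Word (0 + 1))
    _ ≤ Cpn p n := le_ciSup houter_bdd 0

lemma lower_tendsto (p : ℝ) (hp : 1 < p) :
    Tendsto (fun n : ℕ => ((81 * (8 * (3:ℝ) ^ (-p)) ^ n)⁻¹) ^ ((n:ℝ)⁻¹)) atTop
      (nhds (8 * (3:ℝ) ^ (-p))⁻¹) := by
  set a : ℝ := 8 * (3:ℝ) ^ (-p) with ha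
  have hapos : 0 < a := by positivity
  have key : ∀ n : ℕ, 1 ≤ n →
      ((81 * a ^ n)⁻¹) ^ ((n:ℝ)⁻¹) = (81:ℝ) ^ (-((n:ℝ)⁻¹)) * a⁻¹ := by
    intro n hn
    have hnne : ((n:ℝ)) ≠ 0 := by
      have : (0:ℝ) < n := by exact_mod_cast hn
      linarith
    rw [mul_inv, ← inv_pow]
    rw [Real.mul_rpow (by norm_num) (by positivity)]
    congr 1
    · rw [Real.inv_rpow (by norm_num), ← Real.rpow_neg (by norm_num)]
    · rw [← Real.rpow_natCast a⁻¹ n, ← Real.rpow_mul (by positivity),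
        mul_inv_cancel₀ hnne, Real.rpow_one]
  have h1 : Tendsto (fun n : ℕ => -((n:ℝ)⁻¹)) atTop (nhds 0) := by
    have := tendsto_inv_atTop_zero.comp (tendsto_natCast_atTop_atTop (R := ℝ))
    simpa using this.neg
  have h2 : Tendsto (fun n : ℕ => (81:ℝ) ^ (-((n:ℝ)⁻¹))) atTop (nhds 1) := by
    have hcomp : Tendsto (fun n : ℕ => -((n:ℝ)⁻¹) * Real.log 81) atTop (nhds 0) := by
      simpa using h1.mul_const (Real.log 81)
    have hexp := (Real.continuous_exp.tendsto 0).comp hcomp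
    rw [Real.exp_zero] at hexp
    apply hexp.congr
    intro n
    simp only [Function.comp_apply]
    rw [Real.rpow_def_of_pos (by norm_num : (0:ℝ) < 81), mul_comm]
  have h3 : Tendsto (fun n : ℕ => (81:ℝ) ^ (-((n:ℝ)⁻¹)) * a⁻¹) atTop (nhds a⁻¹) := by
    have := h2.mul_const a⁻¹
    simpa using this
  apply h3.congr'
  filter_upwards [eventually_ge_atTop 1] with n hn
  exact (key n hn).symm

end AuxFinal

/-- **Statement 7** (Proposition `prop.betap`).
Let `p > 1`.  There exists a constant `C > 0`, depending only on `p`, such that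
`C_p^{(n)} ≤ C·(8·3^{-p})^n` for every `n ≥ 1`.  In particular, `ρ_p ≥ 3^p/8`. -/
theorem carpet_conductance_upper_bound (p : ℝ) (hp : 1 < p) :
    (∃ C > 0, ∀ n : ℕ, 1 ≤ n → Cpn p n ≤ C * (8 * (3 : ℝ) ^ (-p)) ^ n) ∧
      (∀ ρ : ℝ, IsCondLimit p ρ → (3 : ℝ) ^ p / 8 ≤ ρ) := by
  constructor
  · exact ⟨81, by norm_num, fun n _ => Cpn_le p hp n⟩
  · intro ρ hρ
    set a : ℝ := 8 * (3:ℝ) ^ (-p) with ha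
    have hapos : 0 < a := by positivity
    have hcomp : ∀ n : ℕ, ((81 * a ^ n)⁻¹) ^ ((n:ℝ)⁻¹) ≤ ((Cpn p n)⁻¹) ^ ((n:ℝ)⁻¹) := by
      intro n
      apply Real.rpow_le_rpow (by positivity)
      · exact inv_anti₀ (Cpn_pos p hp n) (Cpn_le p hp n)
      · positivity
    have hlim := le_of_tendsto_of_tendsto' (lower_tendsto p hp) hρ hcomp
    have hfin : a⁻¹ = (3:ℝ) ^ p / 8 := by
      rw [ha, Real.rpow_neg (by norm_num : (0:ℝ) ≤ 3), mul_inv, inv_inv]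
      ring
    rw [hfin] at hlim
    exact hlim
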